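/- Let π be a probability measure on Ω = X × {-1,1} invariant under the involution ι(x,v)=(x,−v), and let η ≪ π be a probability measure with bounded density ς = dη/dπ. Then for every δ > 0, ∫ (1 − exp((1/2)(log(ς∘ι + δ) − log(ς + δ)))) dη ≥ FI(η + δπ | π) − δ, where FI(μ|π) = (1/2)∫(√(dμ/dπ∘ι) − √(dμ/dπ))² dπ. -/
import Mathlib


open MeasureTheory
open scoped ENNReal

/-- The velocity-reversal map `ι(x,v) = (x,−v)` on `Ω = X × {-1,1}`,
with the two-point velocity space modelled by `Bool`. -/
def velRev {X : Type*} (p : X × Bool) : X × Bool := (p.1, !p.2)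

/-- `velRev` as a measurable equivalence. -/
def velRevEquiv {X : Type*} [MeasurableSpace X] : (X × Bool) ≃ᵐ (X × Bool) where
  toFun := velRev
  invFun := velRev
  left_inv := fun p => by simp [velRev]
  right_inv := fun p => by simp [velRev]
  measurable_toFun := measurable_fst.prodMk ((measurable_from_top : Measurable Bool.not).comp measurable_snd)
  measurable_invFun := measurable_fst.prodMk ((measurable_from_top : Measurable Bool.not).comp measurable_snd)

/-- The Fisher information `FI(μ|π) = (1/2) ∫ (√(dμ/dπ ∘ ι) − √(dμ/dπ))² dπ`. -/
noncomputable def fisherInfo {X : Type*} [MeasurableSpace X]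
    (π μ : Measure (X × Bool)) : ℝ :=
  (1/2) * ∫ p, (Real.sqrt ((μ.rnDeriv π (velRev p)).toReal)
      - Real.sqrt ((μ.rnDeriv π p).toReal)) ^ 2 ∂π

/-- for `π` a probability measure invariant under the involution `ι` and
`η = ς π` a probability measure with bounded density `ς`, for every `δ > 0`:
`∫ (1 − exp((1/2)(log(ς∘ι + δ) − log(ς + δ)))) dη ≥ FI(η + δπ | π) − δ`. -/
theorem stmt6 {X : Type*} [MeasurableSpace X] (π : Measure (X × Bool))
    [IsProbabilityMeasure π]
    (hinv : Measure.map (velRev (X := X)) π = π)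
    (ς : X × Bool → ℝ) (hmeas : Measurable ς) (hnn : ∀ p, 0 ≤ ς p)
    (C : ℝ) (hbd : ∀ p, ς p ≤ C)
    (η : Measure (X × Bool)) [IsProbabilityMeasure η]
    (hη : η = π.withDensity fun p => ENNReal.ofReal (ς p))
    (δ : ℝ) (hδ : 0 < δ) :
    fisherInfo π (η + ENNReal.ofReal δ • π) - δ
      ≤ ∫ p, (1 - Real.exp ((1/2) * (Real.log (ς (velRev p) + δ)
          - Real.log (ς p + δ)))) ∂η := by
  classical
  have hvmeas : Measurable (velRev (X := X)) :=
    measurable_fst.prodMk ((measurable_from_top : Measurable Bool.not).comp measurable_snd)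
  have hmp : MeasurePreserving (velRev (X := X)) π π := ⟨hvmeas, hinv⟩
  have hemb : MeasurableEmbedding (velRev (X := X)) :=
    (velRevEquiv (X := X)).measurableEmbedding
  set g : X × Bool → ℝ := fun p => ς p + δ with hgdef
  have hgpos : ∀ p, 0 < g p := fun p => by
    have := hnn p; simp only [hgdef]; linarith
  have hgmeas : Measurable g := hmeas.add_const δ
  set M : ℝ := |C| + δ with hM
  have hMpos : 0 < M := by positivity
  have hgle : ∀ p, g p ≤ M := fun p => by
    have := hbd p; have := le_abs_self C; simp only [hgdef, hM]; linarith
  -- bounded measurable ⇒ integrable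
  have hint : ∀ (f : X × Bool → ℝ), Measurable f → ∀ K : ℝ, (∀ p, |f p| ≤ K) →
      Integrable f π := fun f hf K hK =>
    ⟨hf.aestronglyMeasurable, HasFiniteIntegral.of_bounded (C := K) (ae_of_all _ hK)⟩
  -- the exponential equals a ratio of square roots
  have hexp : ∀ p, Real.exp ((1/2) * (Real.log (ς (velRev p) + δ) - Real.log (ς p + δ)))
      = Real.sqrt (g (velRev p)) / Real.sqrt (g p) := by
    intro p
    have h1 : ∀ q, Real.exp ((1/2) * Real.log (g q)) = Real.sqrt (g q) := by
      intro q
      rw [Real.sqrt_eq_rpow, Real.rpow_def_of_pos (hgpos q), mul_comm]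
    have : (1/2 : ℝ) * (Real.log (ς (velRev p) + δ) - Real.log (ς p + δ))
        = (1/2) * Real.log (g (velRev p)) - (1/2) * Real.log (g p) := by
      simp only [hgdef]; ring
    rw [this, Real.exp_sub, h1, h1]
  -- key integrands
  set F : X × Bool → ℝ := fun p => g p - Real.sqrt (g p * g (velRev p)) with hF
  set G : X × Bool → ℝ := fun p => Real.sqrt (g (velRev p)) / Real.sqrt (g p) with hG
  have hFmeas : Measurable F :=
    hgmeas.sub ((hgmeas.mul (hgmeas.comp hvmeas)).sqrt)
  have hGmeas : Measurable G := (hgmeas.comp hvmeas).sqrt.div hgmeas.sqrt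
  have hsqrt_bd : ∀ p q, Real.sqrt (g p * g q) ≤ M := by
    intro p q
    calc Real.sqrt (g p * g q) ≤ Real.sqrt (M * M) :=
          Real.sqrt_le_sqrt (mul_le_mul (hgle p) (hgle q) (hgpos q).le hMpos.le)
      _ = M := Real.sqrt_mul_self hMpos.le
  have hFint : Integrable F π := by
    refine hint F hFmeas (2 * M) fun p => ?_
    have h1 := hgle p; have h2 := hsqrt_bd p (velRev p)
    have h3 := (hgpos p).le; have h4 := Real.sqrt_nonneg (g p * g (velRev p))
    rw [abs_le]; constructor <;> simp only [hF] <;> linarith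
  have hGnn : ∀ p, 0 ≤ G p := fun p => by
    exact div_nonneg (Real.sqrt_nonneg _) (Real.sqrt_nonneg _)
  have hGbd : ∀ p, |G p| ≤ Real.sqrt M / Real.sqrt δ := by
    intro p
    rw [abs_of_nonneg (hGnn p)]
    apply div_le_div₀ (Real.sqrt_nonneg M) (Real.sqrt_le_sqrt (hgle _))
      (Real.sqrt_pos.2 hδ) (Real.sqrt_le_sqrt ?_)
    have := hnn p; simp only [hgdef]; linarith
  have hGint : Integrable G π := hint G hGmeas _ hGbd
  -- rnDeriv identification
  have hμ : η + ENNReal.ofReal δ • π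
      = π.withDensity (fun p => ENNReal.ofReal (g p)) := by
    rw [hη, ← withDensity_const (μ := π) (ENNReal.ofReal δ),
      ← withDensity_add_left (hmeas.ennreal_ofReal)]
    congr 1
    funext p
    simp [hgdef, ENNReal.ofReal_add (hnn p) hδ.le]
  have hrn : (η + ENNReal.ofReal δ • π).rnDeriv π =ᵐ[π] fun p => ENNReal.ofReal (g p) := by
    rw [hμ]
    exact Measure.rnDeriv_withDensity π (hgmeas.ennreal_ofReal)
  have hrn' : (fun p => (η + ENNReal.ofReal δ • π).rnDeriv π (velRev p))
      =ᵐ[π] fun p => ENNReal.ofReal (g (velRev p)) :=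
    hmp.quasiMeasurePreserving.ae_eq_comp hrn
  -- Fisher information computation
  have hFI : fisherInfo π (η + ENNReal.ofReal δ • π) = ∫ p, F p ∂π := by
    have hcong : fisherInfo π (η + ENNReal.ofReal δ • π)
        = (1/2) * ∫ p, (Real.sqrt (g (velRev p)) - Real.sqrt (g p)) ^ 2 ∂π := by
      unfold fisherInfo
      congr 1
      refine integral_congr_ae ?_
      filter_upwards [hrn, hrn'] with p h1 h2
      rw [h1, h2, ENNReal.toReal_ofReal (hgpos _).le, ENNReal.toReal_ofReal (hgpos _).le]
    rw [hcong]
    -- expand the square and use invariance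
    have hsq : ∀ p, (Real.sqrt (g (velRev p)) - Real.sqrt (g p)) ^ 2
        = g (velRev p) + g p - 2 * Real.sqrt (g p * g (velRev p)) := by
      intro p
      rw [Real.sqrt_mul (hgpos p).le]
      have h1 := Real.mul_self_sqrt (hgpos p).le
      have h2 := Real.mul_self_sqrt (hgpos (velRev p)).le
      linear_combination h1 + h2
    have hswap : ∫ p, g (velRev p) ∂π = ∫ p, g p ∂π :=
      hmp.integral_comp hemb g
    have hgint : Integrable g π := hint g hgmeas M fun p => by
      rw [abs_of_nonneg (hgpos p).le]; exact hgle p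
    have hgιint : Integrable (fun p => g (velRev p)) π := hint _ (hgmeas.comp hvmeas) M
      fun p => by rw [abs_of_nonneg (hgpos _).le]; exact hgle _
    have hsint : Integrable (fun p => Real.sqrt (g p * g (velRev p))) π :=
      hint _ ((hgmeas.mul (hgmeas.comp hvmeas)).sqrt) M fun p => by
        rw [abs_of_nonneg (Real.sqrt_nonneg _)]; exact hsqrt_bd _ _
    have haux : Integrable (fun p => g (velRev p) + g p) π := hgιint.add hgint
    calc (1/2 : ℝ) * ∫ p, (Real.sqrt (g (velRev p)) - Real.sqrt (g p)) ^ 2 ∂π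
        = (1/2) * ∫ p, (g (velRev p) + g p - 2 * Real.sqrt (g p * g (velRev p))) ∂π := by
          rw [integral_congr_ae (ae_of_all _ hsq)]
      _ = (1/2) * ((∫ p, g (velRev p) ∂π) + (∫ p, g p ∂π)
            - 2 * ∫ p, Real.sqrt (g p * g (velRev p)) ∂π) := by
          rw [integral_sub haux (hsint.const_mul 2), integral_add hgιint hgint,
            integral_const_mul _ _]
      _ = (∫ p, g p ∂π) - ∫ p, Real.sqrt (g p * g (velRev p)) ∂π := by
          rw [hswap]; ring
      _ = ∫ p, F p ∂π := by
          rw [← integral_sub hgint hsint]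
  -- rewrite the η-integral
  have hηint : ∫ p, (1 - Real.exp ((1/2) * (Real.log (ς (velRev p) + δ)
          - Real.log (ς p + δ)))) ∂η
      = (∫ p, F p ∂π) - δ + δ * ∫ p, G p ∂π := by
    have hη' : η = π.withDensity (fun p => ((ς p).toNNReal : ℝ≥0∞)) := hη
    rw [hη', integral_withDensity_eq_integral_smul
      (f := fun p => (ς p).toNNReal) hmeas.real_toNNReal _]
    have hpt : ∀ p, (ς p).toNNReal • (1 - Real.exp ((1/2) * (Real.log (ς (velRev p) + δ)
          - Real.log (ς p + δ)))) = F p + (-δ + δ * G p) := by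
      intro p
      rw [NNReal.smul_def, Real.coe_toNNReal _ (hnn p), hexp p]
      simp only [hF, hG, smul_eq_mul]
      have ha : Real.sqrt (g p) ≠ 0 := (Real.sqrt_pos.2 (hgpos p)).ne'
      have h2 : Real.sqrt (g p * g (velRev p)) = Real.sqrt (g p) * Real.sqrt (g (velRev p)) :=
        Real.sqrt_mul (hgpos p).le _
      have h3 : Real.sqrt (g p) * Real.sqrt (g p) = g p := Real.mul_self_sqrt (hgpos p).le
      have hς : ς p = g p - δ := by simp [hgdef]
      rw [hς, h2]
      field_simp
      linear_combination Real.sqrt (g (velRev p)) * h3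
    rw [integral_congr_ae (ae_of_all _ hpt)]
    have haux2 : Integrable (fun p => -δ + δ * G p) π :=
      (integrable_const (-δ)).add (hGint.const_mul δ)
    rw [integral_add hFint haux2, integral_add (integrable_const (-δ)) (hGint.const_mul δ),
      integral_const_mul _ _, integral_const]
    simp [measure_univ]
    ring
  rw [hFI, hηint]
  have : 0 ≤ δ * ∫ p, G p ∂π :=
    mul_nonneg hδ.le (integral_nonneg hGnn)
  linarith
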